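/- arXiv:2008.10987 — 2 statements merged into one kernel-verified Lean document; each statement's English description precedes it below -/
import Mathlib

section
/- Let p ≥ 2 be an integer, let t ∈ ℝ and let a > 0. Then | |t|^{1/p} − a |^2 ≤ min{ |t − a^p|^{2/p} , (t − a^p)^2 / a^{2p−2} }. -/
/-- For `0 ≤ y ≤ x`, `(x - y)^n ≤ x^n - y^n`. -/
lemma aux_sub_pow_le (x y : ℝ) (hy : 0 ≤ y) (hxy : y ≤ x) (n : ℕ) (hn : n ≠ 0) :
    (x - y) ^ n ≤ x ^ n - y ^ n := by
  have h := pow_add_pow_le (x := x - y) (y := y) (by linarith) hy hn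
  have : x - y + y = x := by ring
  rw [this] at h
  linarith

/-- For `0 ≤ b`, `0 ≤ a`, `|b - a| * a^(n-1) ≤ |b^n - a^n|` when `n ≥ 1`. -/
lemma aux_abs_sub_mul_le (b a : ℝ) (hb : 0 ≤ b) (ha : 0 ≤ a) (n : ℕ) (hn : 1 ≤ n) :
    |b - a| * a ^ (n - 1) ≤ |b ^ n - a ^ n| := by
  rcases le_total a b with h | h
  · rw [abs_of_nonneg (by linarith), abs_of_nonneg (sub_nonneg.mpr (pow_le_pow_left₀ ha h n))]
    have h1 : a ^ (n - 1) * b ≤ b ^ (n - 1) * b :=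
      mul_le_mul_of_nonneg_right (pow_le_pow_left₀ ha h _) hb
    have h2 : b ^ (n - 1) * b = b ^ n := by
      rw [← pow_succ]; congr 1; omega
    have h3 : a ^ (n - 1) * a = a ^ n := by
      rw [← pow_succ]; congr 1; omega
    nlinarith [pow_nonneg ha (n-1)]
  · rw [abs_of_nonpos (by linarith), abs_of_nonpos (sub_nonpos.mpr (pow_le_pow_left₀ hb h n))]
    have h1 : b * a ^ (n - 1) ≥ b ^ (n-1) * b := by
      have := mul_le_mul_of_nonneg_left (pow_le_pow_left₀ hb h (n-1)) hb
      nlinarith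
    have h2 : b ^ (n - 1) * b = b ^ n := by
      rw [← pow_succ]; congr 1; omega
    have h3 : a ^ (n - 1) * a = a ^ n := by
      rw [← pow_succ]; congr 1; omega
    nlinarith [pow_nonneg ha (n-1)]

/-- **Elementary risk-reduction inequality.** For an integer `p ≥ 2`, `t ∈ ℝ` and
`a > 0`, `||t|^{1/p} − a|² ≤ min{|t − a^p|^{2/p}, (t − a^p)²/a^{2p−2}}`. -/
theorem abs_rpow_sub_sq_le_min (p : ℕ) (hp : 2 ≤ p) (t a : ℝ) (ha : 0 < a) :
    |(|t| ^ ((1 : ℝ) / p)) - a| ^ 2 ≤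
      min (|t - a ^ p| ^ ((2 : ℝ) / p)) ((t - a ^ p) ^ 2 / a ^ (2 * p - 2)) := by
  have hp0 : (p : ℝ) ≠ 0 := by positivity
  set b : ℝ := |t| ^ ((1 : ℝ) / p) with hb_def
  have hb : 0 ≤ b := Real.rpow_nonneg (abs_nonneg t) _
  have hbp : b ^ p = |t| := by
    rw [hb_def, ← Real.rpow_natCast (|t| ^ ((1:ℝ)/p)) p, ← Real.rpow_mul (abs_nonneg t)]
    rw [one_div_mul_cancel hp0, Real.rpow_one]
  set c : ℝ := |t - a ^ p| with hc_def
  have hc : 0 ≤ c := abs_nonneg _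
  have hkey : |b ^ p - a ^ p| ≤ c := by
    rw [hbp, hc_def]
    have h := abs_abs_sub_abs_le_abs_sub t (a ^ p)
    rwa [abs_of_nonneg (show (0:ℝ) ≤ a ^ p by positivity)] at h
  refine le_min ?_ ?_
  · -- first bound: |b - a|^2 ≤ c^(2/p)
    have h1 : |b - a| ^ p ≤ c := by
      refine le_trans ?_ hkey
      rcases le_total a b with h | h
      · rw [abs_of_nonneg (by linarith), abs_of_nonneg
          (sub_nonneg.mpr (pow_le_pow_left₀ ha.le h p))]
        exact aux_sub_pow_le b a ha.le h p (by omega)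
      · rw [abs_of_nonpos (by linarith), abs_of_nonpos
          (sub_nonpos.mpr (pow_le_pow_left₀ hb h p)), neg_sub, neg_sub]
        exact aux_sub_pow_le a b hb h p (by omega)
    have h2 : |b - a| ≤ c ^ ((1:ℝ)/p) := by
      have := Real.rpow_le_rpow (by positivity) h1 (le_of_lt (by positivity : (0:ℝ) < 1/p))
      rwa [← Real.rpow_natCast |b - a| p, ← Real.rpow_mul (abs_nonneg _),
        mul_one_div, div_self hp0, Real.rpow_one] at this
    calc |b - a| ^ 2 ≤ (c ^ ((1:ℝ)/p)) ^ 2 :=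
          pow_le_pow_left₀ (abs_nonneg _) h2 2
    _ = c ^ ((2:ℝ)/p) := by
          rw [← Real.rpow_natCast (c ^ ((1:ℝ)/p)) 2, ← Real.rpow_mul hc]
          norm_num [div_eq_mul_inv, mul_comm]
  · -- second bound
    have hap : (0:ℝ) < a ^ (p-1) := by positivity
    have h1 : |b - a| * a ^ (p - 1) ≤ c :=
      le_trans (aux_abs_sub_mul_le b a hb ha.le p (by omega)) hkey
    have h2 : |b - a| ≤ c / a ^ (p-1) := (le_div_iff₀ hap).mpr h1
    have h3 : |b - a| ^ 2 ≤ (c / a ^ (p-1)) ^ 2 :=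
      pow_le_pow_left₀ (abs_nonneg _) h2 2
    calc |b - a| ^ 2 ≤ (c / a ^ (p-1)) ^ 2 := h3
    _ = (t - a ^ p) ^ 2 / a ^ (2 * p - 2) := by
        rw [div_pow, hc_def, sq_abs, ← pow_mul]
        congr 2
        omega
end

section
/- Let p ≥ 2 be an integer, let T be a real-valued random variable with finite second moment, and let a > 0. Then E| |T|^{1/p} − a |^2 ≤ min{ (E(T − a^p)^2)^{1/p} , a^{2−2p} E(T − a^p)^2 }. In particular, for any probability density f with ‖f‖_p > 0 and any estimator T̂ of ‖f‖_p^p, the estimator N̂ := |T̂|^{1/p} of ‖f‖_p satisfies E_f|N̂ − ‖f‖_p|^2 ≤ min{ (E_f(T̂ − ‖f‖_p^p)^2)^{1/p} , E_f(T̂ − ‖f‖_p^p)^2 / ‖f‖_p^{2p−2} }. -/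
/-!
Write `x = |t|^{1/p}`, so that `x^p = |t|` and `|x^p - a^p| ≤ |t - a^p|`. For `x, a ≥ 0`,
superadditivity of `u ↦ u^p` on `[0, ∞)` gives `|x - a|^p ≤ |x^p - a^p|`, and the factorisation
`x^p - a^p = (x - a) ∑ x^i a^{p-1-i}`, whose sum is at least `a^{p-1}`, gives
`a^{p-1} |x - a| ≤ |x^p - a^p|`. Squaring and integrating yields the second bound directly and the
first after Jensen's inequality for the concave map `u ↦ u^{1/p}`. The statement about `‖f‖_p` is
the case `a = ‖f‖_p`.
-/

open MeasureTheory ProbabilityTheory Filter Finset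
open scoped ENNReal NNReal

noncomputable section

namespace NormEst

/-- The scaled kernel `K_h(x) = V_h⁻¹ · K(x₁/h₁,…,x_d/h_d)`. -/
def scaledKernel {d : ℕ} (K : (Fin d → ℝ) → ℝ) (h : Fin d → ℝ) (x : Fin d → ℝ) : ℝ :=
  (∏ k, h k)⁻¹ * K (fun i => x i / h i)

/-- The smoothed density `S_h(x) = ∫ K_h(x − y) f(y) dy`. -/
def smoothed {d : ℕ} (K : (Fin d → ℝ) → ℝ) (h : Fin d → ℝ) (f : (Fin d → ℝ) → ℝ)
    (x : Fin d → ℝ) : ℝ :=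
  ∫ y, scaledKernel K h (x - y) * f y

/-- The bias function `B_h = S_h − f`. -/
def biasFun {d : ℕ} (K : (Fin d → ℝ) → ℝ) (h : Fin d → ℝ) (f : (Fin d → ℝ) → ℝ)
    (x : Fin d → ℝ) : ℝ :=
  smoothed K h f x - f x

/-- `f` is a probability density on `ℝ^d`. -/
def IsDensity {d : ℕ} (f : (Fin d → ℝ) → ℝ) : Prop :=
  Measurable f ∧ (∀ x, 0 ≤ f x) ∧ (∫ x, f x) = 1

/-- `K` is supported on `[-1,1]^d`. -/
def SuppIcc {d : ℕ} (K : (Fin d → ℝ) → ℝ) : Prop :=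
  ∀ x : Fin d → ℝ, x ∉ Set.Icc (fun _ => (-1 : ℝ)) (fun _ => (1 : ℝ)) → K x = 0

/-- The sup-norm `‖K‖_∞` of a (bounded) kernel. -/
def supNorm {d : ℕ} (K : (Fin d → ℝ) → ℝ) : ℝ := ⨆ x, |K x|

/-- The kernel `U_h^{(1)}(x₁,…,x_p) = ∫ K_h(y−x₁)⋯K_h(y−x_p) dy`. -/
def U1 {d : ℕ} (p : ℕ) (K : (Fin d → ℝ) → ℝ) (h : Fin d → ℝ)
    (x : Fin p → Fin d → ℝ) : ℝ :=
  ∫ y, ∏ i, scaledKernel K h (y - x i)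

/-- The kernel `U_h^{(2)}(x₁,…,x_p) = p⁻¹ Σ_i Π_{j≠i} K_h(x_j−x_i)`. -/
def U2 {d : ℕ} (p : ℕ) (K : (Fin d → ℝ) → ℝ) (h : Fin d → ℝ)
    (x : Fin p → Fin d → ℝ) : ℝ :=
  (p : ℝ)⁻¹ * ∑ i, ∏ j ∈ Finset.univ.erase i, scaledKernel K h (x j - x i)

/-- The U-statistic with kernel `U` built from the data `X = (X₁,…,X_n)`:
the sum over all `p`-element subsets of `{1,…,n}` (each subset enumerated in
increasing order), divided by the binomial coefficient `C(n,p)`. -/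
def ustat {α : Type*} {n p : ℕ} (U : (Fin p → α) → ℝ) (X : Fin n → α) : ℝ :=
  ((n.choose p : ℝ))⁻¹ *
    ∑ s ∈ (Finset.powersetCard p (Finset.univ : Finset (Fin n))).attach,
      U (fun i => X ((s.1.orderIsoOfFin (Finset.mem_powersetCard.mp s.2).2 i : Fin n)))

/-- `T̂_h = (1−p)·T̂_{1,h} + p·T̂_{2,h}`, evaluated on the data `X`. -/
def Tstat {d : ℕ} (p : ℕ) (K : (Fin d → ℝ) → ℝ) (h : Fin d → ℝ) {n : ℕ}
    (X : Fin n → Fin d → ℝ) : ℝ :=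
  (1 - (p : ℝ)) * ustat (U1 p K h) X + (p : ℝ) * ustat (U2 p K h) X

/-- The `L_s(ℝ^d)` norm (with respect to Lebesgue measure), as a real number. -/
def LpNorm {d : ℕ} (s : ℝ≥0∞) (f : (Fin d → ℝ) → ℝ) : ℝ :=
  (eLpNorm f s volume).toReal

end NormEst

section RootBounds

variable {x a : ℝ} {n : ℕ}

theorem abs_sub_pow_le_abs_pow_sub (hx : 0 ≤ x) (ha : 0 ≤ a) (hn : n ≠ 0) :
    |x - a| ^ n ≤ |x ^ n - a ^ n| := by
  wlog hax : a ≤ x generalizing x a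
  · simpa only [abs_sub_comm] using this ha hx (le_of_not_ge hax)
  have hsuper := pow_add_pow_le (sub_nonneg.2 hax) ha hn
  rw [sub_add_cancel] at hsuper
  rw [abs_of_nonneg (sub_nonneg.2 hax), abs_of_nonneg (sub_nonneg.2 (pow_le_pow_left₀ ha hax n))]
  linarith

theorem pow_pred_mul_abs_sub_le_abs_pow_sub (hx : 0 ≤ x) (ha : 0 ≤ a) (hn : n ≠ 0) :
    a ^ (n - 1) * |x - a| ≤ |x ^ n - a ^ n| := by
  have hsum : a ^ (n - 1) ≤ ∑ i ∈ range n, x ^ i * a ^ (n - 1 - i) := by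
    simpa using single_le_sum (f := fun i => x ^ i * a ^ (n - 1 - i))
      (fun i _ => by positivity) (mem_range.2 (Nat.pos_of_ne_zero hn))
  rw [← geom_sum₂_mul x a n, abs_mul]
  gcongr
  exact hsum.trans (le_abs_self _)

theorem abs_rpow_one_div_pow_sub_le (t : ℝ) (ha : 0 ≤ a) (hn : n ≠ 0) :
    |(|t| ^ ((1 : ℝ) / n)) ^ n - a ^ n| ≤ |t - a ^ n| := by
  have h := abs_abs_sub_abs_le_abs_sub t (a ^ n)
  rwa [abs_of_nonneg (pow_nonneg ha n), ← Real.rpow_inv_natCast_pow (abs_nonneg t) hn,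
    ← one_div] at h

theorem rpow_two_sub_two_mul_eq_inv_pow (ha : 0 < a) (hn : n ≠ 0) :
    a ^ ((2 : ℝ) - 2 * n) = (a ^ (2 * n - 2))⁻¹ := by
  rw [← Real.rpow_natCast, ← Real.rpow_neg ha.le]
  push_cast [Nat.cast_sub (by omega : 2 ≤ 2 * n)]
  ring_nf

theorem sq_abs_rpow_one_div_sub_le_rpow (t : ℝ) (ha : 0 ≤ a) (hn : n ≠ 0) :
    |(|t| ^ ((1 : ℝ) / n)) - a| ^ 2 ≤ ((t - a ^ n) ^ 2) ^ ((1 : ℝ) / n) := by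
  set x := |t| ^ ((1 : ℝ) / n)
  have hpow : (|x - a| ^ 2) ^ n ≤ (t - a ^ n) ^ 2 := by
    rw [← pow_mul, mul_comm, pow_mul, ← sq_abs (t - a ^ n)]
    gcongr
    exact (abs_sub_pow_le_abs_pow_sub (by positivity) ha hn).trans
      (abs_rpow_one_div_pow_sub_le t ha hn)
  calc |x - a| ^ 2 = ((|x - a| ^ 2) ^ n) ^ ((1 : ℝ) / n) := by
        rw [one_div, Real.pow_rpow_inv_natCast (by positivity) hn]
    _ ≤ ((t - a ^ n) ^ 2) ^ ((1 : ℝ) / n) := by gcongr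

theorem sq_abs_rpow_one_div_sub_le_mul (t : ℝ) (ha : 0 < a) (hn : n ≠ 0) :
    |(|t| ^ ((1 : ℝ) / n)) - a| ^ 2 ≤ a ^ ((2 : ℝ) - 2 * n) * (t - a ^ n) ^ 2 := by
  set x := |t| ^ ((1 : ℝ) / n)
  have hmul : (a ^ (n - 1) * |x - a|) ^ 2 ≤ (t - a ^ n) ^ 2 := by
    rw [← sq_abs (t - a ^ n)]
    gcongr
    exact (pow_pred_mul_abs_sub_le_abs_pow_sub (by positivity) ha.le hn).trans
      (abs_rpow_one_div_pow_sub_le t ha.le hn)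
  rw [rpow_two_sub_two_mul_eq_inv_pow ha hn, inv_mul_eq_div, le_div_iff₀ (by positivity),
    show 2 * n - 2 = (n - 1) * 2 by omega, pow_mul]
  linarith [mul_pow (a ^ (n - 1)) |x - a| 2]

end RootBounds

section Expectation

variable {Ω : Type*} [MeasurableSpace Ω] {P : Measure Ω} {g : Ω → ℝ} {θ : ℝ}

theorem MeasureTheory.Integrable.rpow_of_le_one [IsFiniteMeasure P] (hg : Integrable g P)
    (hg0 : 0 ≤ᵐ[P] g) (hθ0 : 0 ≤ θ) (hθ1 : θ ≤ 1) : Integrable (fun ω => g ω ^ θ) P := by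
  have hmem : MemLp g (ENNReal.ofReal θ) P :=
    (memLp_one_iff_integrable.2 hg).mono_exponent (by simpa using hθ1)
  refine hmem.integrable_norm_rpow'.congr ?_
  filter_upwards [hg0] with ω hω
  rw [Real.norm_of_nonneg hω, ENNReal.toReal_ofReal hθ0]

theorem integral_rpow_le_rpow_integral [IsProbabilityMeasure P] (hg : Integrable g P)
    (hg0 : 0 ≤ᵐ[P] g) (hθ0 : 0 ≤ θ) (hθ1 : θ ≤ 1) :
    ∫ ω, g ω ^ θ ∂P ≤ (∫ ω, g ω ∂P) ^ θ :=
  (Real.concaveOn_rpow hθ0 hθ1).le_map_integral (Real.continuous_rpow_const hθ0).continuousOn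
    isClosed_Ici hg0 hg (hg.rpow_of_le_one hg0 hθ0 hθ1)

theorem integral_sq_abs_rpow_one_div_sub_le_min [IsProbabilityMeasure P] {n : ℕ} (hn : n ≠ 0)
    {T : Ω → ℝ} (hT : MemLp T 2 P) {a : ℝ} (ha : 0 < a) :
    (∫ ω, |(|T ω| ^ ((1 : ℝ) / n)) - a| ^ 2 ∂P) ≤
      min ((∫ ω, (T ω - a ^ n) ^ 2 ∂P) ^ ((1 : ℝ) / n))
        (a ^ ((2 : ℝ) - 2 * (n : ℝ)) * ∫ ω, (T ω - a ^ n) ^ 2 ∂P) := by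
  have hθ0 : (0 : ℝ) ≤ 1 / n := by positivity
  have hθ1 : (1 : ℝ) / n ≤ 1 :=
    div_le_one_of_le₀ (by exact_mod_cast Nat.one_le_iff_ne_zero.2 hn) (by positivity)
  have hsq : Integrable (fun ω => (T ω - a ^ n) ^ 2) P :=
    (hT.sub (memLp_const _)).integrable_sq
  have hsq0 : 0 ≤ᵐ[P] fun ω => (T ω - a ^ n) ^ 2 := ae_of_all _ fun _ => sq_nonneg _
  refine le_min ?_ ?_
  · calc _ ≤ ∫ ω, ((T ω - a ^ n) ^ 2) ^ ((1 : ℝ) / n) ∂P :=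
          integral_mono_of_nonneg (ae_of_all _ fun _ => by positivity)
            (hsq.rpow_of_le_one hsq0 hθ0 hθ1)
            (ae_of_all _ fun ω => sq_abs_rpow_one_div_sub_le_rpow (T ω) ha.le hn)
      _ ≤ _ := integral_rpow_le_rpow_integral hsq hsq0 hθ0 hθ1
  · rw [← integral_const_mul]
    exact integral_mono_of_nonneg (ae_of_all _ fun _ => by positivity) (hsq.const_mul _)
      (ae_of_all _ fun ω => sq_abs_rpow_one_div_sub_le_mul (T ω) ha hn)

end Expectation

namespace NormEst

/-- **Risk reduction (expectation version).** For an integer `p ≥ 2`, a real random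
variable `T` with finite second moment and `a > 0`,
`E||T|^{1/p} − a|² ≤ min{(E(T − a^p)²)^{1/p}, a^{2−2p} E(T − a^p)²}`; in particular,
for a probability density `f` with `‖f‖_p > 0` and an estimator `T̂` of `‖f‖_p^p`,
the estimator `N̂ = |T̂|^{1/p}` of `‖f‖_p` satisfies
`E_f|N̂ − ‖f‖_p|² ≤ min{(E_f(T̂ − ‖f‖_p^p)²)^{1/p}, E_f(T̂ − ‖f‖_p^p)²/‖f‖_p^{2p−2}}`. -/
theorem risk_reduction (p : ℕ) (hp : 2 ≤ p)
    {Ω : Type*} [MeasurableSpace Ω] (P : Measure Ω) [IsProbabilityMeasure P] :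
    (∀ (T : Ω → ℝ), MemLp T 2 P → ∀ (a : ℝ), 0 < a →
      (∫ ω, |(|T ω| ^ ((1 : ℝ) / p)) - a| ^ 2 ∂P) ≤
        min ((∫ ω, (T ω - a ^ p) ^ 2 ∂P) ^ ((1 : ℝ) / p))
          (a ^ ((2 : ℝ) - 2 * (p : ℝ)) * ∫ ω, (T ω - a ^ p) ^ 2 ∂P)) ∧
    (∀ {d : ℕ} (f : (Fin d → ℝ) → ℝ), IsDensity f → 0 < LpNorm (p : ℝ≥0∞) f →
      ∀ (That : Ω → ℝ), MemLp That 2 P →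
      (∫ ω, |(|That ω| ^ ((1 : ℝ) / p)) - LpNorm (p : ℝ≥0∞) f| ^ 2 ∂P) ≤
        min ((∫ ω, (That ω - LpNorm (p : ℝ≥0∞) f ^ p) ^ 2 ∂P) ^ ((1 : ℝ) / p))
          ((∫ ω, (That ω - LpNorm (p : ℝ≥0∞) f ^ p) ^ 2 ∂P) /
            LpNorm (p : ℝ≥0∞) f ^ (2 * p - 2))) := by
  have hp0 : p ≠ 0 := by omega
  refine ⟨fun T hT a ha => integral_sq_abs_rpow_one_div_sub_le_min hp0 hT ha,
    fun f _ hf That hThat => ?_⟩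
  simpa only [rpow_two_sub_two_mul_eq_inv_pow hf hp0, inv_mul_eq_div] using
    integral_sq_abs_rpow_one_div_sub_le_min hp0 hThat hf

end NormEst
end
end
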